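/- arXiv:1511.07028 — 2 statements merged into one kernel-verified Lean document; each statement's English description precedes it below -/
import Mathlib

section
/- For every q with 2 < q < 3 there exists a constant c > 0 such that |(a+b)^q - a^q - b^q - q a^{q-1} b - q a b^{q-1}| ≤ c (a^2 b^{q-2} + a^{q-2} b^2) for all a, b > 0. -/
/-!
Both sides are homogeneous of degree `q` and symmetric in `a, b`, so it suffices to take
`a = 1` and `b = t ∈ (0, 1]`. There Bernoulli's inequality `(1 + t)^q ≥ 1 + q t` bounds the
remainder below by `-(t^q + q t^(q-1)) ≥ -(q + 1) t^(q-2)`, while its concave version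
`(1 + t)^(q-2) ≤ 1 + (q-2) t` gives `(1 + t)^q ≤ 1 + q t + (3q - 5) t^2`, bounding it above by
`(q + 1) t^2`.
-/

open Real

noncomputable def binomialRemainder (q a b : ℝ) : ℝ :=
  (a + b) ^ q - a ^ q - b ^ q - q * a ^ (q - 1) * b - q * a * b ^ (q - 1)

noncomputable def binomialWeight (q a b : ℝ) : ℝ :=
  a ^ 2 * b ^ (q - 2) + a ^ (q - 2) * b ^ 2

lemma binomialRemainder_comm (q a b : ℝ) : binomialRemainder q a b = binomialRemainder q b a := by
  unfold binomialRemainder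
  rw [add_comm b a]
  ring

lemma binomialWeight_comm (q a b : ℝ) : binomialWeight q a b = binomialWeight q b a := by
  unfold binomialWeight
  ring

lemma rpow_sub_one_mul_self {a : ℝ} (ha : 0 < a) (q : ℝ) : a ^ (q - 1) * a = a ^ q := by
  rw [← rpow_add_one ha.ne', sub_add_cancel]

lemma rpow_sub_two_mul_sq {a : ℝ} (ha : 0 < a) (q : ℝ) : a ^ (q - 2) * a ^ 2 = a ^ q := by
  rw [← rpow_natCast, ← rpow_add ha]
  norm_num

lemma binomialRemainder_mul_mul {a x y : ℝ} (ha : 0 < a) (hx : 0 ≤ x) (hy : 0 ≤ y) (q : ℝ) :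
    binomialRemainder q (a * x) (a * y) = a ^ q * binomialRemainder q x y := by
  unfold binomialRemainder
  rw [← mul_add, mul_rpow ha.le (add_nonneg hx hy), mul_rpow ha.le hx, mul_rpow ha.le hy,
    mul_rpow ha.le hx, mul_rpow ha.le hy, ← rpow_sub_one_mul_self ha q]
  ring

lemma binomialWeight_mul_mul {a x y : ℝ} (ha : 0 < a) (hx : 0 ≤ x) (hy : 0 ≤ y) (q : ℝ) :
    binomialWeight q (a * x) (a * y) = a ^ q * binomialWeight q x y := by
  unfold binomialWeight
  rw [mul_rpow ha.le hx, mul_rpow ha.le hy, ← rpow_sub_two_mul_sq ha q]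
  ring

lemma abs_binomialRemainder_one_le {q t : ℝ} (hq₂ : 2 ≤ q) (hq₃ : q ≤ 3) (ht₀ : 0 < t)
    (ht₁ : t ≤ 1) : |binomialRemainder q 1 t| ≤ (q + 1) * binomialWeight q 1 t := by
  have bernoulli : 1 + q * t ≤ (1 + t) ^ q :=
    one_add_mul_self_le_rpow_one_add (by linarith) (by linarith)
  have concave_bernoulli : (1 + t) ^ (q - 2) ≤ 1 + (q - 2) * t :=
    rpow_one_add_le_one_add_mul_self (by linarith) (by linarith) (by linarith)
  have upper : (1 + t) ^ q ≤ 1 + q * t + (3 * q - 5) * t ^ 2 := by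
    rw [← rpow_sub_two_mul_sq (by linarith : (0 : ℝ) < 1 + t)]
    have cube_le_sq : t ^ 3 ≤ t ^ 2 := pow_le_pow_of_le_one ht₀.le ht₁ (by norm_num)
    nlinarith [mul_le_mul_of_nonneg_right concave_bernoulli (sq_nonneg (1 + t))]
  have sub_two_nonneg : 0 ≤ t ^ (q - 2) := rpow_nonneg ht₀.le _
  have q_le_sub_two : t ^ q ≤ t ^ (q - 2) := by
    rw [← rpow_sub_two_mul_sq ht₀]
    exact mul_le_of_le_one_right sub_two_nonneg (pow_le_one₀ ht₀.le ht₁)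
  have sub_one_le_sub_two : t ^ (q - 1) ≤ t ^ (q - 2) := by
    rw [show q - 1 = q - 2 + 1 by ring, rpow_add_one ht₀.ne']
    exact mul_le_of_le_one_right sub_two_nonneg ht₁
  have q_nonneg : 0 ≤ t ^ q := rpow_nonneg ht₀.le _
  have sub_one_nonneg : 0 ≤ t ^ (q - 1) := rpow_nonneg ht₀.le _
  simp only [binomialRemainder, binomialWeight, one_rpow, one_pow, one_mul, mul_one]
  rw [abs_le]
  constructor <;> nlinarith [sq_nonneg t]

lemma abs_binomialRemainder_le_of_le {q a b : ℝ} (hq₂ : 2 ≤ q) (hq₃ : q ≤ 3) (hb : 0 < b)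
    (hba : b ≤ a) : |binomialRemainder q a b| ≤ (q + 1) * binomialWeight q a b := by
  have ha : 0 < a := hb.trans_le hba
  have hab : b = a * (b / a) := (mul_div_cancel₀ b ha.ne').symm
  have hba' : b / a ≤ 1 := (div_le_one ha).2 hba
  have hbound := abs_binomialRemainder_one_le hq₂ hq₃ (div_pos hb ha) hba'
  have haq : 0 < a ^ q := rpow_pos_of_pos ha q
  rw [← mul_one a, hab, binomialRemainder_mul_mul ha zero_le_one (div_pos hb ha).le,
    binomialWeight_mul_mul ha zero_le_one (div_pos hb ha).le, abs_mul, abs_of_pos haq,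
    mul_left_comm]
  exact mul_le_mul_of_nonneg_left hbound haq.le

lemma abs_binomialRemainder_le {q a b : ℝ} (hq₂ : 2 ≤ q) (hq₃ : q ≤ 3) (ha : 0 < a) (hb : 0 < b) :
    |binomialRemainder q a b| ≤ (q + 1) * binomialWeight q a b := by
  rcases le_total b a with hba | hab
  · exact abs_binomialRemainder_le_of_le hq₂ hq₃ hb hba
  · rw [binomialRemainder_comm, binomialWeight_comm]
    exact abs_binomialRemainder_le_of_le hq₂ hq₃ ha hab

/-- For `2 < q < 3` there is `c > 0` with
`|(a+b)^q - a^q - b^q - q a^{q-1} b - q a b^{q-1}| ≤ c (a² b^{q-2} + a^{q-2} b²)`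
for all `a, b > 0`. -/
theorem stmt_4 (q : ℝ) (hq : 2 < q) (hq' : q < 3) :
    ∃ c : ℝ, 0 < c ∧ ∀ a b : ℝ, 0 < a → 0 < b →
      |(a + b) ^ q - a ^ q - b ^ q - q * a ^ (q - 1) * b - q * a * b ^ (q - 1)| ≤
        c * (a ^ 2 * b ^ (q - 2) + a ^ (q - 2) * b ^ 2) :=
  ⟨q + 1, by linarith, fun _ _ ha hb => abs_binomialRemainder_le hq.le hq'.le ha hb⟩
end

section
/- For every real q ≥ 1 there exists a constant c > 0 such that |(a+b)^q - a^q - q a^{q-1} b| ≤ c (b^q + a^{q-2} b^2) for all a, b > 0. -/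
/-!
Both sides are homogeneous of degree `q` in `(a, b)`, so it suffices to treat `a = 1`, `b = t`.
The left side is then `(1 + t) ^ q - 1 - q t ≥ 0` (Bernoulli), and convexity of `x ↦ x ^ q`
bounds it by `q t ((1 + t) ^ (q - 1) - 1)`. The last factor is `O(t)` for `t ≤ 1` (Bernoulli or a
chord of `x ↦ x ^ (q - 1)` on `[1, 2]`) and `O(t ^ (q - 1))` for `t ≥ 1`.
-/

open Real

theorem rpow_sub_rpow_le_mul_rpow_sub_one {p x y : ℝ} (hp : 1 ≤ p) (hx : 0 ≤ x) (hxy : x < y) :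
    y ^ p - x ^ p ≤ p * y ^ (p - 1) * (y - x) := by
  have hslope := (convexOn_rpow hp).slope_le_of_hasDerivAt hx (hx.trans hxy.le) hxy
    (hasDerivAt_rpow_const (Or.inl (hx.trans_lt hxy).ne'))
  rwa [slope_def_field, div_le_iff₀ (sub_pos.2 hxy)] at hslope

theorem one_add_rpow_le_one_add_two_rpow_mul {r s : ℝ} (hr : 0 ≤ r) (hs : 0 ≤ s) (hs1 : s ≤ 1) :
    (1 + s) ^ r ≤ 1 + 2 ^ r * s := by
  rcases le_total r 1 with hr1 | hr1
  · have hr2 : r ≤ 2 ^ r := hr1.trans (one_le_rpow one_le_two hr)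
    calc (1 + s) ^ r ≤ 1 + r * s := rpow_one_add_le_one_add_mul_self (by linarith) hr hr1
      _ ≤ 1 + 2 ^ r * s := by gcongr
  · have hchord := (convexOn_rpow hr1).2 (x := 1) (y := 2) (by simp) (by simp)
      (sub_nonneg.2 hs1) hs (by ring)
    simp only [smul_eq_mul, one_rpow, mul_one] at hchord
    calc (1 + s) ^ r = (1 - s + s * 2) ^ r := by ring_nf
      _ ≤ 1 - s + s * 2 ^ r := hchord
      _ ≤ 1 + 2 ^ r * s := by linarith

theorem one_add_rpow_sub_one_sub_mul_le {q t : ℝ} (hq : 1 ≤ q) (ht : 0 < t) :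
    (1 + t) ^ q - 1 - q * t ≤ q * 2 ^ (q - 1) * (t ^ q + t ^ 2) := by
  have htangent : (1 + t) ^ q - 1 ≤ q * (1 + t) ^ (q - 1) * t := by
    simpa using rpow_sub_rpow_le_mul_rpow_sub_one hq zero_le_one (lt_add_of_pos_right 1 ht)
  have hgrowth : (1 + t) ^ (q - 1) ≤ 1 + 2 ^ (q - 1) * (t ^ (q - 1) + t) := by
    rcases le_total t 1 with ht1 | ht1
    · have := one_add_rpow_le_one_add_two_rpow_mul (sub_nonneg.2 hq) ht.le ht1
      have : 0 ≤ (2 : ℝ) ^ (q - 1) * t ^ (q - 1) := by positivity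
      linarith
    · calc (1 + t) ^ (q - 1) ≤ (2 * t) ^ (q - 1) := by gcongr; linarith
        _ = 2 ^ (q - 1) * t ^ (q - 1) := mul_rpow zero_le_two ht.le
        _ ≤ 1 + 2 ^ (q - 1) * (t ^ (q - 1) + t) := by
          have : 0 ≤ (2 : ℝ) ^ (q - 1) * t := by positivity
          linarith
  have hpow : t * t ^ (q - 1) = t ^ q := by
    rw [rpow_sub_one ht.ne', mul_div_cancel₀ _ ht.ne']
  calc (1 + t) ^ q - 1 - q * t ≤ q * t * ((1 + t) ^ (q - 1) - 1) := by linarith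
    _ ≤ q * t * (2 ^ (q - 1) * (t ^ (q - 1) + t)) := by gcongr; linarith
    _ = q * 2 ^ (q - 1) * (t ^ q + t ^ 2) := by rw [← hpow]; ring

/-- For real `q ≥ 1` there is `c > 0` such that
`|(a+b)^q - a^q - q a^{q-1} b| ≤ c (b^q + a^{q-2} b²)` for all `a, b > 0`. -/
theorem stmt_5 (q : ℝ) (hq : 1 ≤ q) :
    ∃ c : ℝ, 0 < c ∧ ∀ a b : ℝ, 0 < a → 0 < b →
      |(a + b) ^ q - a ^ q - q * a ^ (q - 1) * b| ≤
        c * (b ^ q + a ^ (q - 2) * b ^ 2) := by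
  refine ⟨q * 2 ^ (q - 1), by positivity, fun a b ha hb => ?_⟩
  set t := b / a
  have ht : 0 < t := div_pos hb ha
  have hb_eq : b = a * t := (mul_div_cancel₀ b ha.ne').symm
  have hlhs : (a + b) ^ q - a ^ q - q * a ^ (q - 1) * b = a ^ q * ((1 + t) ^ q - 1 - q * t) := by
    rw [hb_eq, ← mul_one_add, mul_rpow ha.le (by positivity), rpow_sub_one ha.ne']
    field_simp
  have hrhs : b ^ q + a ^ (q - 2) * b ^ 2 = a ^ q * (t ^ q + t ^ 2) := by
    rw [hb_eq, mul_rpow ha.le ht.le, rpow_sub ha, rpow_two]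
    field_simp
  have hbernoulli : 0 ≤ (1 + t) ^ q - 1 - q * t := by
    linarith [one_add_mul_self_le_rpow_one_add (s := t) (by linarith) hq]
  rw [hlhs, hrhs, abs_of_nonneg (mul_nonneg (by positivity) hbernoulli), mul_left_comm]
  exact mul_le_mul_of_nonneg_left (one_add_rpow_sub_one_sub_mul_le hq ht) (by positivity)
end
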